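/- arXiv:2506.12804 — 7 statements merged into one kernel-verified Lean document; each statement's English description precedes it below -/
import Mathlib

section
/- Let F be a fuzzy propositional formula, built from atoms in a signature σ, numeric constants in [0,1], a fuzzy negation, fuzzy conjunctions, fuzzy disjunctions, and fuzzy implications. Let I and J be fuzzy interpretations (functions σ → [0,1]) such that J(p) ≤ I(p) for all atoms p. Then the truth value of the reduct F^I under J is at most the truth value of F under I: υ_J(F^I) ≤ υ_I(F), where the reduct is defined by: p^I = p for atoms and constants; (¬G)^I is the constant υ_I(¬G); (G⊙H)^I = (G^I ⊙ H^I) ⊗_m υ_I(G⊙H) for binary connectives ⊙, with ⊗_m(x,y)=min(x,y). -/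
open unitInterval
open scoped Classical

noncomputable section

def IsFuzzyNeg (n : I → I) : Prop :=
  (∀ ⦃x y : I⦄, x ≤ y → n y ≤ n x) ∧ n 0 = 1 ∧ n 1 = 0

def IsFuzzyConj (c : I → I → I) : Prop :=
  (∀ ⦃a b a' b' : I⦄, a ≤ a' → b ≤ b' → c a b ≤ c a' b') ∧
  (∀ x y, c x y = c y x) ∧ (∀ x y z, c (c x y) z = c x (c y z)) ∧ (∀ x, c 1 x = x)

def IsFuzzyDisj (d : I → I → I) : Prop :=
  (∀ ⦃a b a' b' : I⦄, a ≤ a' → b ≤ b' → d a b ≤ d a' b') ∧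
  (∀ x y, d x y = d y x) ∧ (∀ x y z, d (d x y) z = d x (d y z)) ∧ (∀ x, d 0 x = x)

def IsFuzzyImpl (i : I → I → I) : Prop :=
  (∀ (c : I) ⦃a b : I⦄, a ≤ b → i b c ≤ i a c) ∧
  (∀ (a : I) ⦃b c : I⦄, b ≤ c → i a b ≤ i a c) ∧
  (∀ x, i 1 x = x) ∧ i 0 0 = 1

inductive FF (A : Type) where
  | atom : A → FF A
  | const : I → FF A
  | neg : (I → I) → FF A → FF A
  | conj : (I → I → I) → FF A → FF A → FF A
  | disj : (I → I → I) → FF A → FF A → FF A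
  | impl : (I → I → I) → FF A → FF A → FF A

def WellFormed {A : Type} : FF A → Prop
  | .atom _ => True
  | .const _ => True
  | .neg n G => IsFuzzyNeg n ∧ WellFormed G
  | .conj c G H => IsFuzzyConj c ∧ WellFormed G ∧ WellFormed H
  | .disj d G H => IsFuzzyDisj d ∧ WellFormed G ∧ WellFormed H
  | .impl i G H => IsFuzzyImpl i ∧ WellFormed G ∧ WellFormed H

def eval {A : Type} (Iv : A → I) : FF A → I
  | .atom p => Iv p
  | .const c => c
  | .neg n G => n (eval Iv G)
  | .conj c G H => c (eval Iv G) (eval Iv H)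
  | .disj d G H => d (eval Iv G) (eval Iv H)
  | .impl i G H => i (eval Iv G) (eval Iv H)

def reduct {A : Type} (Iv : A → I) : FF A → FF A
  | .atom p => .atom p
  | .const c => .const c
  | .neg n G => .const (eval Iv (.neg n G))
  | .conj c G H => .conj (fun a b => min a b)
      (.conj c (reduct Iv G) (reduct Iv H)) (.const (eval Iv (.conj c G H)))
  | .disj d G H => .conj (fun a b => min a b)
      (.disj d (reduct Iv G) (reduct Iv H)) (.const (eval Iv (.disj d G H)))
  | .impl i G H => .conj (fun a b => min a b)
      (.impl i (reduct Iv G) (reduct Iv H)) (.const (eval Iv (.impl i G H)))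

def ltp {A : Type} (p : Set A) (J Iv : A → I) : Prop :=
  (∀ a ∉ p, J a = Iv a) ∧ (∀ a ∈ p, J a ≤ Iv a) ∧ J ≠ Iv

def yStable {A : Type} (y : I) (F : FF A) (Iv : A → I) (p : Set A) : Prop :=
  y ≤ eval Iv F ∧ ¬ ∃ J, ltp p J Iv ∧ y ≤ eval J (reduct Iv F)

def Stable1 {A : Type} (F : FF A) (Iv : A → I) (p : Set A) : Prop :=
  eval Iv F = 1 ∧ ¬ ∃ J, ltp p J Iv ∧ eval J (reduct Iv F) = 1

def lukDisj (x y : I) : I :=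
  ⟨min (x.1 + y.1) 1, le_min (add_nonneg x.2.1 y.2.1) zero_le_one, min_le_right _ _⟩

def rImpl (x y : I) : I := if x ≤ y then 1 else y

theorem eval_conj_min_const_le {A : Type} (J : A → I) (G : FF A) (c : I) :
    eval J (.conj (fun a b => min a b) G (.const c)) ≤ c :=
  min_le_right _ _

-- The reduct caps every binary node by its value under `Iv`, so no induction is needed.
theorem eval_reduct_le_general {A : Type} (F : FF A)
    (Iv J : A → I) (hJI : ∀ a, J a ≤ Iv a) :
    eval J (reduct Iv F) ≤ eval Iv F := by
  cases F with
  | atom p => exact hJI p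
  | const c => exact le_rfl
  | neg n G => exact le_rfl
  | conj c G H => exact eval_conj_min_const_le J _ _
  | disj d G H => exact eval_conj_min_const_le J _ _
  | impl i G H => exact eval_conj_min_const_le J _ _

theorem eval_reduct_le {A : Type} (F : FF A) (hF : WellFormed F)
    (Iv J : A → I) (hJI : ∀ a, J a ≤ Iv a) :
    eval J (reduct Iv F) ≤ eval Iv F :=
  eval_reduct_le_general F Iv J hJI

end
end

section
/- For any fuzzy propositional formula F and any fuzzy interpretation I, the truth value of F under I equals the truth value of the reduct F^I under I: υ_I(F) = υ_I(F^I). Consequently, I satisfies F (i.e., υ_I(F)=1) if and only if I satisfies F^I. -/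
open unitInterval
open scoped Classical

noncomputable section

theorem eval_reduct {A : Type} (Iv : A → I) (F : FF A) : eval Iv (reduct Iv F) = eval Iv F := by
  induction F with
  | atom | const | neg => rfl
  | conj _ _ _ ihG ihH | disj _ _ _ ihG ihH | impl _ _ _ ihG ihH =>
    simp only [reduct, eval, ihG, ihH, min_self]

theorem eval_reduct_self_general {A : Type} (F : FF A) (Iv : A → I) :
    eval Iv (reduct Iv F) = eval Iv F ∧
      (eval Iv F = 1 ↔ eval Iv (reduct Iv F) = 1) :=
  ⟨eval_reduct Iv F, by rw [eval_reduct]⟩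

theorem eval_reduct_self {A : Type} (F : FF A) (hF : WellFormed F) (Iv : A → I) :
    eval Iv (reduct Iv F) = eval Iv F ∧
      (eval Iv F = 1 ↔ eval Iv (reduct Iv F) = 1) :=
  eval_reduct_self_general F Iv

end
end

section
/- Let → be a fuzzy implication satisfying →(x,y) = 1 iff y ≥ x. For any fuzzy formula F, an interpretation I is a y-stable model of F relative to a set p of atoms if and only if I is a 1-stable model of the formula y → F relative to p. (I is a y-stable model of F relative to p if υ_I(F) ≥ y and there is no interpretation J with J <^p I and υ_J(F^I) ≥ y, where J <^p I means J agrees with I outside p, J(q) ≤ I(q) for q ∈ p, and J ≠ I.) -/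
open unitInterval
open scoped Classical

noncomputable section

theorem one_le_iff_of_eq_one_iff {i : I → I → I} (hiff : ∀ x y : I, i x y = 1 ↔ x ≤ y)
    (x y : I) : 1 ≤ i x y ↔ x ≤ y :=
  le_one'.ge_iff_eq.trans (hiff x y)

theorem eval_reduct_impl_const {A : Type} (i : I → I → I) (y : I) (F : FF A) (Iv J : A → I) :
    eval J (reduct Iv (.impl i (.const y) F)) = min (i y (eval J (reduct Iv F))) (i y (eval Iv F)) :=
  rfl

theorem yStable_iff_oneStable_general {A : Type} (i : I → I → I)
    (hiff : ∀ x y : I, i x y = 1 ↔ x ≤ y)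
    (F : FF A) (Iv : A → I) (p : Set A) (y : I) :
    yStable y F Iv p ↔ yStable 1 (.impl i (.const y) F) Iv p := by
  simp only [yStable, eval_reduct_impl_const, le_min_iff, eval, one_le_iff_of_eq_one_iff hiff]
  constructor
  · rintro ⟨hy, hnoJ⟩
    exact ⟨hy, fun ⟨J, hJ, hJy, _⟩ => hnoJ ⟨J, hJ, hJy⟩⟩
  · -- the reduct's constant conjunct `υ_I(y → F)` is 1 exactly when `I` itself satisfies `y ≤ υ_I(F)`
    rintro ⟨hy, hnoJ⟩
    exact ⟨hy, fun ⟨J, hJ, hJy⟩ => hnoJ ⟨J, hJ, hJy, hy⟩⟩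

theorem yStable_iff_oneStable {A : Type} (i : I → I → I) (hi : IsFuzzyImpl i)
    (hiff : ∀ x y : I, i x y = 1 ↔ x ≤ y)
    (F : FF A) (hF : WellFormed F) (Iv : A → I) (p : Set A) (y : I) :
    yStable y F Iv p ↔ yStable 1 (.impl i (.const y) F) Iv p :=
  yStable_iff_oneStable_general i hiff F Iv p y

end
end

section
/- For any fuzzy formulas F and G and fuzzy conjunction ⊗, an interpretation I is a (1-)stable model of F ⊗ ¬G relative to a set p of atoms if and only if I is a stable model of F relative to p and υ_I(¬G) = 1. (Here I is a stable model of H relative to p if υ_I(H)=1 and no J <^p I satisfies υ_J(H^I)=1.) -/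
open unitInterval
open scoped Classical

noncomputable section

theorem IsFuzzyConj.apply_one_right {c : I → I → I} (hc : IsFuzzyConj c) (x : I) : c x 1 = x :=
  (hc.2.1 x 1).trans (hc.2.2.2 x)

theorem IsFuzzyConj.apply_le_left {c : I → I → I} (hc : IsFuzzyConj c) (x y : I) :
    c x y ≤ x :=
  (hc.1 le_rfl le_one').trans_eq (hc.apply_one_right x)

theorem IsFuzzyConj.apply_eq_one_iff {c : I → I → I} (hc : IsFuzzyConj c) {x y : I} :
    c x y = 1 ↔ x = 1 ∧ y = 1 := by
  refine ⟨fun h => ⟨?_, ?_⟩, by rintro ⟨rfl, rfl⟩; exact hc.apply_one_right 1⟩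
  · exact le_antisymm le_one' (h ▸ hc.apply_le_left x y)
  · exact le_antisymm le_one' (h ▸ hc.2.1 x y ▸ hc.apply_le_left y x)

-- The reduct of `¬G` is the constant `υ_I(¬G)`, here `1`, so it drops out of the reduct.
theorem eval_reduct_conj_neg {A : Type} {c : I → I → I} (hc : IsFuzzyConj c) (n : I → I)
    {F : FF A} (G : FF A) {Iv : A → I} (hF : eval Iv F = 1) (hG : eval Iv (.neg n G) = 1)
    (J : A → I) : eval J (reduct Iv (.conj c F (.neg n G))) = eval J (reduct Iv F) := by
  simp only [reduct, eval] at hG ⊢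
  rw [hF, hG, hc.apply_one_right, hc.apply_one_right, min_eq_left le_one']

theorem stable_conj_constraint_general {A : Type} (c : I → I → I) (n : I → I)
    (hc : IsFuzzyConj c)
    (F G : FF A)
    (Iv : A → I) (p : Set A) :
    Stable1 (.conj c F (.neg n G)) Iv p ↔
      Stable1 F Iv p ∧ eval Iv (.neg n G) = 1 := by
  have hval : eval Iv (.conj c F (.neg n G)) = 1 ↔ eval Iv F = 1 ∧ eval Iv (.neg n G) = 1 :=
    hc.apply_eq_one_iff
  by_cases h : eval Iv F = 1 ∧ eval Iv (.neg n G) = 1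
  · simp only [Stable1, hval, eval_reduct_conj_neg hc n G h.1 h.2, h, true_and, and_true]
  · simp only [Stable1, hval]
    tauto

theorem stable_conj_constraint {A : Type} (c : I → I → I) (n : I → I)
    (hc : IsFuzzyConj c) (hn : IsFuzzyNeg n)
    (F G : FF A) (hF : WellFormed F) (hG : WellFormed G)
    (Iv : A → I) (p : Set A) :
    Stable1 (.conj c F (.neg n G)) Iv p ↔
      Stable1 F Iv p ∧ eval Iv (.neg n G) = 1 :=
  stable_conj_constraint_general c n hc F G Iv p

end
end

section
/- Let F be a classical propositional formula and F^fuzzy its fuzzy translation using the constant 0 for ⊥, 1 for ⊤, ¬_s(x)=1−x, min, max, and →_s(x,y)=max(1−x,y). For any fuzzy interpretation I, define defuz(I) to be the classical interpretation making an atom p true iff I(p)=1. Then: (i) if υ_I(F^fuzzy) = 1, then defuz(I) satisfies F; and (ii) if υ_I(F^fuzzy) = 0, then defuz(I) does not satisfy F. -/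
open unitInterval
open scoped Classical

noncomputable section

/-- Classical propositional formulas. -/
inductive PF (A : Type) where
  | bot : PF A
  | top : PF A
  | atom : A → PF A
  | neg : PF A → PF A
  | and : PF A → PF A → PF A
  | or : PF A → PF A → PF A
  | imp : PF A → PF A → PF A

def psat {A : Type} (X : A → Prop) : PF A → Prop
  | .bot => False
  | .top => True
  | .atom p => X p
  | .neg F => ¬ psat X F
  | .and F G => psat X F ∧ psat X G
  | .or F G => psat X F ∨ psat X G
  | .imp F G => psat X F → psat X G

/-- The fuzzy translation `F^fuzzy`: `⊥ ↦ 0`, `⊤ ↦ 1`, `¬ ↦ 1 - x`, `∧ ↦ min`,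
`∨ ↦ max`, `→ ↦ max (1 - x) y`. -/
def fuz {A : Type} : PF A → FF A
  | .bot => .const 0
  | .top => .const 1
  | .atom p => .atom p
  | .neg F => .neg unitInterval.symm (fuz F)
  | .and F G => .conj (fun a b => min a b) (fuz F) (fuz G)
  | .or F G => .disj (fun a b => max a b) (fuz F) (fuz G)
  | .imp F G => .impl (fun a b => max (unitInterval.symm a) b) (fuz F) (fuz G)

/-- `I^fuzzy`: true atoms map to 1, false atoms to 0. -/
def toFuzzy {A : Type} (X : A → Prop) : A → I := fun p => if X p then 1 else 0

/-! The values 0 and 1 behave classically under the translation: `σ` swaps them, and `min`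
(resp. `max`) is 1 iff both (resp. one) of its arguments are, 0 iff one (resp. both) are. So by
induction, every classical interpretation that agrees with `Iv` on the atoms where `Iv` is crisp
makes true what evaluates to 1 and false what evaluates to 0; `defuz` is such an interpretation.
In `I` the numerals `0` and `1` are definitionally `⊥` and `⊤`, which is what lets the lattice
lemmas `min_eq_top`, `max_eq_bot`, … apply. -/

theorem psat_of_eval_fuz {A : Type} {Iv : A → I} {X : A → Prop}
    (h_one : ∀ p, Iv p = 1 → X p) (h_zero : ∀ p, Iv p = 0 → ¬ X p) (F : PF A) :
    (eval Iv (fuz F) = 1 → psat X F) ∧ (eval Iv (fuz F) = 0 → ¬ psat X F) := by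
  induction F with
  | bot => simp [fuz, eval, psat]
  | top => simp [fuz, eval, psat]
  | atom p => exact ⟨h_one p, h_zero p⟩
  | neg G ihG =>
    exact ⟨fun h => ihG.2 (symm_eq_one.mp h), fun h hnG => hnG (ihG.1 (symm_eq_zero.mp h))⟩
  | and G H ihG ihH =>
    refine ⟨fun h => ?_, fun h ⟨hG, hH⟩ => ?_⟩
    · obtain ⟨hG1, hH1⟩ := min_eq_top.mp h
      exact ⟨ihG.1 hG1, ihH.1 hH1⟩
    · rcases min_eq_bot.mp h with hG0 | hH0
      exacts [ihG.2 hG0 hG, ihH.2 hH0 hH]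
  | or G H ihG ihH =>
    refine ⟨fun h => (max_eq_top.mp h).imp ihG.1 ihH.1, fun h hGH => ?_⟩
    obtain ⟨hG0, hH0⟩ := max_eq_bot.mp h
    exact hGH.elim (ihG.2 hG0) (ihH.2 hH0)
  | imp G H ihG ihH =>
    refine ⟨fun h hG => ?_, fun h hGH => ?_⟩
    · rcases max_eq_top.mp h with hG0 | hH1
      exacts [absurd hG (ihG.2 (symm_eq_one.mp hG0)), ihH.1 hH1]
    · obtain ⟨hG1, hH0⟩ := max_eq_bot.mp h
      exact ihH.2 hH0 (hGH (ihG.1 (symm_eq_zero.mp hG1)))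

theorem defuz_models {A : Type} (F : PF A) (Iv : A → I) :
    (eval Iv (fuz F) = 1 → psat (fun p => Iv p = 1) F) ∧
    (eval Iv (fuz F) = 0 → ¬ psat (fun p => Iv p = 1) F) :=
  psat_of_eval_fuz (fun _ h => h) (fun _ h0 h1 => zero_ne_one (h0.symm.trans h1)) F

end
end

section
/- For any classical propositional formula F and any classical interpretation I, I is a Boolean stable model of F relative to a set p of atoms if and only if I^fuzzy is a fuzzy stable model of F^fuzzy relative to p, where F^fuzzy uses ¬_s(x)=1−x, min, max, and →_s(x,y)=max(1−x,y), and I^fuzzy maps true atoms to 1 and false atoms to 0. -/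
open unitInterval
open scoped Classical

noncomputable section

/-- The classical reduct `F^X`: every maximal subformula not satisfied by `X`
is replaced by `⊥`. -/
def preduct {A : Type} (X : A → Prop) : PF A → PF A
  | .bot => .bot
  | .top => .top
  | .atom p => if X p then .atom p else .bot
  | .neg F => if psat X F then .bot else .top
  | .and F G => if psat X (.and F G) then .and (preduct X F) (preduct X G) else .bot
  | .or F G => if psat X (.or F G) then .or (preduct X F) (preduct X G) else .bot
  | .imp F G => if psat X (.imp F G) then .imp (preduct X F) (preduct X G) else .bot

def pltp {A : Type} (p : Set A) (Y X : A → Prop) : Prop :=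
  (∀ a ∉ p, (Y a ↔ X a)) ∧ (∀ a ∈ p, Y a → X a) ∧ Y ≠ X

/-- Boolean stable model of `F` relative to `p`. -/
def PStable {A : Type} (F : PF A) (X : A → Prop) (p : Set A) : Prop :=
  psat X F ∧ ¬ ∃ Y, pltp p Y X ∧ psat Y (preduct X F)


/-! On crisp interpretations the connectives of `F^fuzzy` compute the classical ones: `X^fuzzy`
gives `F^fuzzy` the value `1` exactly when `X ⊨ F`, and for `Y ≤ X` the fuzzy reduct of `F^fuzzy`
relative to `X^fuzzy` takes at `Y^fuzzy` the truth value of `F^X` at `Y`. So every Boolean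
counter-witness `Y <^p X` yields the fuzzy one `Y^fuzzy`. Conversely, a fuzzy counter-witness
`J <^p X^fuzzy` is rounded down to its set of true atoms `{a | J a = 1}`: if the reduct takes the
value `1` at `J`, then `F^X` holds there. The induction proving this must also show that the value
`0` makes `F^X` fail there, because `max (1 - x) y` is antitone in `x`. -/

variable {A : Type}

namespace unitInterval

lemma min_eq_one {a b : I} : min a b = 1 ↔ a = 1 ∧ b = 1 := min_eq_top

lemma max_eq_one {a b : I} : max a b = 1 ↔ a = 1 ∨ b = 1 := max_eq_top

lemma min_eq_zero {a b : I} : min a b = 0 ↔ a = 0 ∨ b = 0 := min_eq_bot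

lemma max_eq_zero {a b : I} : max a b = 0 ↔ a = 0 ∧ b = 0 := max_eq_bot

end unitInterval

open unitInterval

def truthValue (P : Prop) : I := if P then 1 else 0

@[simp] lemma truthValue_eq_one {P : Prop} : truthValue P = 1 ↔ P := by
  by_cases h : P <;> simp [truthValue, h]

@[simp] lemma truthValue_eq_zero {P : Prop} : truthValue P = 0 ↔ ¬ P := by
  by_cases h : P <;> simp [truthValue, h]

lemma truthValue_true : truthValue True = 1 := truthValue_eq_one.2 trivial

lemma truthValue_false : truthValue False = 0 := truthValue_eq_zero.2 not_false

lemma truthValue_injective : Function.Injective truthValue := fun _ _ h =>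
  propext <| truthValue_eq_one.symm.trans <| h ▸ truthValue_eq_one

lemma truthValue_mono {P Q : Prop} (h : P → Q) : truthValue P ≤ truthValue Q := by
  by_cases hP : P
  · simp [truthValue, hP, h hP]
  · simp [truthValue, hP]

lemma symm_truthValue (P : Prop) : σ (truthValue P) = truthValue (¬ P) := by
  by_cases h : P <;> simp [truthValue, h]

lemma min_truthValue (P Q : Prop) : min (truthValue P) (truthValue Q) = truthValue (P ∧ Q) := by
  by_cases hP : P <;> by_cases hQ : Q <;> simp [truthValue, hP, hQ]

lemma max_truthValue (P Q : Prop) : max (truthValue P) (truthValue Q) = truthValue (P ∨ Q) := by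
  by_cases hP : P <;> by_cases hQ : Q <;> simp [truthValue, hP, hQ]

lemma toFuzzy_apply (X : A → Prop) (a : A) : toFuzzy X a = truthValue (X a) := rfl

lemma of_le_toFuzzy_of_eq_one {X : A → Prop} {J : A → I} (hJ : J ≤ toFuzzy X) {a : A}
    (ha : J a = 1) : X a :=
  truthValue_eq_one.1 <| le_antisymm le_one' (ha ▸ hJ a)

lemma le_of_ltp {p : Set A} {J Iv : A → I} (h : ltp p J Iv) : J ≤ Iv := fun a => by
  by_cases ha : a ∈ p
  · exact h.2.1 a ha
  · exact (h.1 a ha).le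

lemma le_of_pltp {p : Set A} {Y X : A → Prop} (h : pltp p Y X) : Y ≤ X := fun a => by
  by_cases ha : a ∈ p
  · exact h.2.1 a ha
  · exact (h.1 a ha).1

lemma ltp_toFuzzy_of_pltp {p : Set A} {Y X : A → Prop} (h : pltp p Y X) :
    ltp p (toFuzzy Y) (toFuzzy X) :=
  ⟨fun a ha => congrArg truthValue (propext (h.1 a ha)),
    fun a _ => truthValue_mono (le_of_pltp h a),
    fun hYX => h.2.2 <| funext fun a => truthValue_injective (congrFun hYX a)⟩

lemma pltp_of_ltp_toFuzzy {p : Set A} {J : A → I} {X : A → Prop} (h : ltp p J (toFuzzy X)) :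
    pltp p (fun a => J a = 1) X := by
  have hJX := le_of_ltp h
  refine ⟨fun a ha => ?_, fun a _ => of_le_toFuzzy_of_eq_one hJX, fun hX => h.2.2 ?_⟩
  · simp only [h.1 a ha, toFuzzy_apply, truthValue_eq_one]
  · funext a
    by_cases ha : X a
    · rw [toFuzzy_apply, truthValue_eq_one.2 ha]
      exact (congrFun hX a).mpr ha
    · rw [toFuzzy_apply, truthValue_eq_zero.2 ha]
      exact le_antisymm (truthValue_eq_zero.2 ha ▸ hJX a) nonneg'

lemma psat_ite_bot (Y : A → Prop) (c : Prop) [Decidable c] (F : PF A) :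
    psat Y (if c then F else .bot) ↔ psat Y F ∧ c := by
  by_cases h : c <;> simp [psat, h]

theorem eval_fuz_toFuzzy (X : A → Prop) (F : PF A) :
    eval (toFuzzy X) (fuz F) = truthValue (psat X F) := by
  induction F with
  | bot => exact truthValue_false.symm
  | top => exact truthValue_true.symm
  | atom p => rfl
  | neg G ih => simp only [fuz, eval, psat, ih, symm_truthValue]
  | and G H ihG ihH => simp only [fuz, eval, psat, ihG, ihH, min_truthValue]
  | or G H ihG ihH => simp only [fuz, eval, psat, ihG, ihH, max_truthValue]
  | imp G H ihG ihH =>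
    simp only [fuz, eval, psat, ihG, ihH, symm_truthValue, max_truthValue, imp_iff_not_or]

theorem eval_reduct_fuz_toFuzzy {X Y : A → Prop} (hYX : Y ≤ X) (F : PF A) :
    eval (toFuzzy Y) (reduct (toFuzzy X) (fuz F)) = truthValue (psat Y (preduct X F)) := by
  induction F with
  | bot => exact truthValue_false.symm
  | top => exact truthValue_true.symm
  | atom p =>
    rw [preduct, psat_ite_bot, psat, and_iff_left_of_imp (hYX p)]
    rfl
  | neg G =>
    simp only [fuz, reduct, preduct, eval, eval_fuz_toFuzzy, symm_truthValue]
    split_ifs <;> simp [psat, *]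
  | and G H ihG ihH =>
    rw [preduct, psat_ite_bot]
    simp only [fuz, reduct, eval, psat, ihG, ihH, eval_fuz_toFuzzy, min_truthValue]
  | or G H ihG ihH =>
    rw [preduct, psat_ite_bot]
    simp only [fuz, reduct, eval, psat, ihG, ihH, eval_fuz_toFuzzy, min_truthValue,
      max_truthValue]
  | imp G H ihG ihH =>
    rw [preduct, psat_ite_bot]
    simp only [fuz, reduct, eval, psat, ihG, ihH, eval_fuz_toFuzzy, min_truthValue,
      max_truthValue, symm_truthValue, imp_iff_not_or]

theorem psat_preduct_of_eval_reduct_eq_one_and_not_of_eq_zero {X : A → Prop} {J : A → I}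
    (hJ : J ≤ toFuzzy X) (F : PF A) :
    (eval J (reduct (toFuzzy X) (fuz F)) = 1 → psat (fun a => J a = 1) (preduct X F)) ∧
    (eval J (reduct (toFuzzy X) (fuz F)) = 0 → ¬ psat (fun a => J a = 1) (preduct X F)) := by
  induction F with
  | bot => simp [fuz, reduct, eval, preduct, psat]
  | top => simp [fuz, reduct, eval, preduct, psat]
  | atom p =>
    rw [preduct, psat_ite_bot, psat]
    exact ⟨fun h => ⟨h, of_le_toFuzzy_of_eq_one hJ h⟩, fun h h' => zero_ne_one (h.symm.trans h'.1)⟩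
  | neg G =>
    simp only [fuz, reduct, preduct, eval, eval_fuz_toFuzzy, symm_truthValue]
    split_ifs <;> simp [psat, *]
  | and G H ihG ihH =>
    rw [preduct, psat_ite_bot]
    simp only [fuz, reduct, eval, psat, eval_fuz_toFuzzy, min_eq_one, min_eq_zero,
      truthValue_eq_one, truthValue_eq_zero]
    tauto
  | or G H ihG ihH =>
    rw [preduct, psat_ite_bot]
    simp only [fuz, reduct, eval, psat, eval_fuz_toFuzzy, min_eq_one, min_eq_zero, max_eq_one,
      max_eq_zero, truthValue_eq_one, truthValue_eq_zero]
    tauto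
  | imp G H ihG ihH =>
    rw [preduct, psat_ite_bot]
    simp only [fuz, reduct, eval, psat, eval_fuz_toFuzzy, min_eq_one, min_eq_zero, max_eq_one,
      max_eq_zero, symm_eq_one, symm_eq_zero, truthValue_eq_one, truthValue_eq_zero]
    tauto

theorem boolean_stable_iff_fuzzy_stable {A : Type} (F : PF A) (X : A → Prop)
    (p : Set A) :
    PStable F X p ↔ Stable1 (fuz F) (toFuzzy X) p := by
  rw [PStable, Stable1, eval_fuz_toFuzzy, truthValue_eq_one]
  refine and_congr_right fun _ => not_congr ⟨?_, ?_⟩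
  · rintro ⟨Y, hY, hsat⟩
    refine ⟨toFuzzy Y, ltp_toFuzzy_of_pltp hY, ?_⟩
    rwa [eval_reduct_fuz_toFuzzy (le_of_pltp hY), truthValue_eq_one]
  · rintro ⟨J, hJ, hone⟩
    exact ⟨_, pltp_of_ltp_toFuzzy hJ,
      (psat_preduct_of_eval_reduct_eq_one_and_not_of_eq_zero (le_of_ltp hJ) F).1 hone⟩

end
end

section
/- The interpretation I = {(p, x), (q, 1−x)} is a fuzzy (1-)stable model of the formula (¬_s q →_r p) ⊗_m (¬_s p →_r q) for every x ∈ [0,1], where ¬_s(x)=1−x, ⊗_m = min, and →_r(a,b) = 1 if a ≤ b and b otherwise. -/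
open unitInterval
open scoped Classical

noncomputable section

/-! Under `reduct I`, the negated body of `¬q →_r p` is frozen to the constant `I(¬q)`, so a
`J` satisfying the reduct needs `I(¬q) ≤ J(p)`. Here `I(¬q) = 1 - (1 - x) = I(p)` and symmetrically
`I(¬p) = I(q)`, so every `J ≤ I` satisfying the reduct coincides with `I`. -/

lemma min_eq_one_iff {a b : I} : min a b = 1 ↔ a = 1 ∧ b = 1 := inf_eq_top_iff

lemma rImpl_eq_one_iff {a b : I} : rImpl a b = 1 ↔ a ≤ b := by
  unfold rImpl
  split_ifs with h
  · simp [h]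
  · exact iff_of_false (fun hb => h (hb ▸ le_one')) h

section Reduct

variable {A : Type} (Iv J : A → I)

lemma eval_reduct_conj_eq_one_iff (c : I → I → I) (G H : FF A) :
    eval J (reduct Iv (.conj c G H)) = 1 ↔
      c (eval J (reduct Iv G)) (eval J (reduct Iv H)) = 1 ∧ eval Iv (.conj c G H) = 1 :=
  min_eq_one_iff

lemma eval_reduct_impl_eq_one_iff (i : I → I → I) (G H : FF A) :
    eval J (reduct Iv (.impl i G H)) = 1 ↔
      i (eval J (reduct Iv G)) (eval J (reduct Iv H)) = 1 ∧ eval Iv (.impl i G H) = 1 :=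
  min_eq_one_iff

lemma eval_reduct_impl_neg_atom_eq_one_iff (n : I → I) (G : FF A) (a : A) :
    eval J (reduct Iv (.impl rImpl (.neg n G) (.atom a))) = 1 ↔
      n (eval Iv G) ≤ J a ∧ n (eval Iv G) ≤ Iv a := by
  rw [eval_reduct_impl_eq_one_iff]
  simp only [reduct, eval, rImpl_eq_one_iff]

end Reduct

theorem stable_pq (x : I) :
    Stable1
      (.conj (fun a b => min a b)
        (.impl rImpl (.neg unitInterval.symm (.atom false)) (.atom true))
        (.impl rImpl (.neg unitInterval.symm (.atom true)) (.atom false)))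
      (fun b : Bool => if b then x else unitInterval.symm x) Set.univ := by
  refine ⟨?_, ?_⟩
  · simp [eval, min_eq_one_iff, rImpl_eq_one_iff]
  · rintro ⟨J, ⟨-, hle, hne⟩, hJ⟩
    rw [eval_reduct_conj_eq_one_iff, min_eq_one_iff, eval_reduct_impl_neg_atom_eq_one_iff,
      eval_reduct_impl_neg_atom_eq_one_iff] at hJ
    obtain ⟨⟨⟨hp, -⟩, hq, -⟩, -⟩ := hJ
    refine hne (funext fun b => le_antisymm (hle b trivial) ?_)
    cases b
    · simpa [eval] using hq
    · simpa [eval] using hp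

end
end
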